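/- Let f ∈ F_∞ and let X solve the ODE Ẍ + (3/t)Ẋ + ∇f(X) = 0 for t > 0 with X(0) = x₀ and Ẋ(0) = 0 (X being C² on (0,∞) and C¹ on [0,∞)). If the limit of Ẍ(t) as t → 0⁺ exists, then this limit equals −∇f(x₀)/4; consequently X(t) = x₀ − (t²/8)·∇f(x₀) + o(t²) as t → 0⁺. -/

import Mathlib

open Set Filter Topology Asymptotics

noncomputable section

abbrev E (n : ℕ) := EuclideanSpace ℝ (Fin n)

def MemFL (n : ℕ) (L : ℝ) (f : E n → ℝ) : Prop :=
  ConvexOn ℝ Set.univ f ∧ ContDiff ℝ 1 f ∧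
    ∀ x y, ‖gradient f x - gradient f y‖ ≤ L * ‖x - y‖

def MemFInf (n : ℕ) (f : E n → ℝ) : Prop := ∃ L > 0, MemFL n L f

def NesterovSol (n : ℕ) (f : E n → ℝ) (x0 : E n) (X : ℝ → E n) : Prop :=
  X 0 = x0 ∧
  ContDiffOn ℝ 1 X (Set.Ici 0) ∧
  ContDiffOn ℝ 2 X (Set.Ioi 0) ∧
  derivWithin X (Set.Ici 0) 0 = 0 ∧
  ∀ t > (0:ℝ), deriv (deriv X) t + (3 / t) • deriv X t + gradient f (X t) = 0

/-! Since `Ẍ → A` and `Ẋ(0⁺) = 0`, the mean value inequality integrates the asymptotics twice: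
`Ẋ(t) = t A + o(t)` and `X(t) = x₀ + (t²/2) A + o(t²)`. In particular `Ẋ(t)/t → A`, so letting
`t → 0⁺` in `Ẍ = -(3/t) Ẋ - ∇f(X)` gives `A = -3A - ∇f(x₀)`, i.e. `A = -∇f(x₀)/4`. -/

section

variable {F : Type*} [NormedAddCommGroup F] [NormedSpace ℝ F]

theorem norm_le_mul_of_tendsto_nhdsGT_zero_of_norm_deriv_le {φ φ' : ℝ → F} {C t : ℝ}
    (ht : 0 < t) (hφ0 : Tendsto φ (𝓝[>] 0) (𝓝 0))
    (hφ : ∀ u ∈ Ioc 0 t, HasDerivAt φ (φ' u) u) (hbound : ∀ u ∈ Ioc 0 t, ‖φ' u‖ ≤ C) :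
    ‖φ t‖ ≤ C * t := by
  have hsegment : ∀ s ∈ Ioo 0 t, ‖φ t - φ s‖ ≤ C * (t - s) := fun s hs =>
    norm_image_sub_le_of_norm_deriv_le_segment'
      (fun u hu => (hφ u ⟨hs.1.trans_le hu.1, hu.2⟩).hasDerivWithinAt)
      (fun u hu => hbound u ⟨hs.1.trans_le hu.1, hu.2.le⟩) t ⟨hs.2.le, le_rfl⟩
  have hlhs : Tendsto (fun s => ‖φ t - φ s‖) (𝓝[>] 0) (𝓝 ‖φ t‖) := by
    simpa using (tendsto_const_nhds.sub hφ0).norm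
  have hrhs : Tendsto (fun s => C * (t - s)) (𝓝[>] 0) (𝓝 (C * t)) :=
    ((continuous_const.mul (continuous_const.sub continuous_id)).tendsto' 0 _
      (by simp)).mono_left nhdsWithin_le_nhds
  exact le_of_tendsto_of_tendsto hlhs hrhs <| mem_of_superset (Ioo_mem_nhdsGT ht) hsegment

theorem isLittleO_pow_succ_of_hasDerivAt {φ φ' : ℝ → F} {k : ℕ}
    (hφ0 : Tendsto φ (𝓝[>] 0) (𝓝 0)) (hφ : ∀ t > 0, HasDerivAt φ (φ' t) t)
    (hφ' : φ' =o[𝓝[>] 0] fun t => t ^ k) :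
    φ =o[𝓝[>] 0] fun t => t ^ (k + 1) := by
  refine isLittleO_iff.2 fun c hc => ?_
  obtain ⟨δ, hδ, hsmall⟩ := mem_nhdsGT_iff_exists_Ioo_subset.1 (hφ'.def hc)
  filter_upwards [Ioo_mem_nhdsGT hδ] with t ht
  have hbound : ∀ u ∈ Ioc 0 t, ‖φ' u‖ ≤ c * t ^ k := fun u hu => calc
    ‖φ' u‖ ≤ c * ‖u ^ k‖ := hsmall ⟨hu.1, hu.2.trans_lt ht.2⟩
    _ = c * u ^ k := by rw [norm_pow, Real.norm_of_nonneg hu.1.le]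
    _ ≤ c * t ^ k := by gcongr; exacts [hu.1.le, hu.2]
  calc ‖φ t‖ ≤ c * t ^ k * t :=
        norm_le_mul_of_tendsto_nhdsGT_zero_of_norm_deriv_le ht.1 hφ0
          (fun u hu => hφ u hu.1) hbound
    _ = c * ‖t ^ (k + 1)‖ := by rw [norm_pow, Real.norm_of_nonneg ht.1.le]; ring

theorem ContDiffOn.tendsto_deriv_nhdsGT {X : ℝ → F} {a : ℝ} (hX : ContDiffOn ℝ 1 X (Ici a)) :
    Tendsto (deriv X) (𝓝[>] a) (𝓝 (derivWithin X (Ici a) a)) := by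
  have hcont := (hX.continuousOn_derivWithin (uniqueDiffOn_Ici a) le_rfl a self_mem_Ici).tendsto
  refine (hcont.mono_left (nhdsWithin_mono a Ioi_subset_Ici_self)).congr' ?_
  filter_upwards [self_mem_nhdsWithin] with t ht
  exact derivWithin_of_mem_nhds (mem_of_superset (Ioi_mem_nhds ht) Ioi_subset_Ici_self)

end

theorem MemFInf.continuous_gradient {n : ℕ} {f : E n → ℝ} (hf : MemFInf n f) :
    Continuous (gradient f) := by
  obtain ⟨-, -, -, hf1, -⟩ := hf
  exact (InnerProductSpace.toDual ℝ (E n)).symm.continuous.comp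
    (hf1.continuous_fderiv one_ne_zero)

namespace NesterovSol

variable {n : ℕ} {f : E n → ℝ} {x0 : E n} {X : ℝ → E n}

theorem hasDerivAt (hX : NesterovSol n f x0 X) {t : ℝ} (ht : 0 < t) :
    HasDerivAt X (deriv X t) t :=
  ((hX.2.2.1.differentiableOn two_ne_zero).differentiableAt (Ioi_mem_nhds ht)).hasDerivAt

theorem hasDerivAt_deriv (hX : NesterovSol n f x0 X) {t : ℝ} (ht : 0 < t) :
    HasDerivAt (deriv X) (deriv (deriv X) t) t :=
  (((hX.2.2.1.deriv_of_isOpen isOpen_Ioi (by norm_num)).differentiableOn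
    one_ne_zero).differentiableAt (Ioi_mem_nhds ht)).hasDerivAt

theorem tendsto_nhdsGT_zero (hX : NesterovSol n f x0 X) : Tendsto X (𝓝[>] 0) (𝓝 x0) := by
  simpa only [hX.1] using (hX.2.1.continuousOn.continuousWithinAt self_mem_Ici).tendsto.mono_left
    (nhdsWithin_mono 0 Ioi_subset_Ici_self)

theorem tendsto_deriv_nhdsGT_zero (hX : NesterovSol n f x0 X) :
    Tendsto (deriv X) (𝓝[>] 0) (𝓝 0) := by
  simpa only [hX.2.2.2.1] using hX.2.1.tendsto_deriv_nhdsGT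

variable {A : E n}

theorem isLittleO_deriv_sub_smul (hX : NesterovSol n f x0 X)
    (hA : Tendsto (deriv (deriv X)) (𝓝[>] 0) (𝓝 A)) :
    (fun t => deriv X t - t • A) =o[𝓝[>] 0] fun t => t ^ 1 := by
  refine isLittleO_pow_succ_of_hasDerivAt (φ' := fun t => deriv (deriv X) t - A) ?_
    (fun t ht => ((hX.hasDerivAt_deriv ht).sub ((hasDerivAt_id t).smul_const A)).congr_deriv
      (by simp)) ?_
  · simpa using hX.tendsto_deriv_nhdsGT_zero.sub
      (continuous_id.smul (continuous_const (y := A))).continuousWithinAt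
  · simpa using (isLittleO_one_iff ℝ).2 (tendsto_sub_nhds_zero_iff.2 hA)

theorem isLittleO_sub_sub_smul (hX : NesterovSol n f x0 X)
    (hA : Tendsto (deriv (deriv X)) (𝓝[>] 0) (𝓝 A)) :
    (fun t => X t - x0 - (t ^ 2 / 2) • A) =o[𝓝[>] 0] fun t => t ^ 2 := by
  refine isLittleO_pow_succ_of_hasDerivAt ?_ (fun t ht => ?_) (hX.isLittleO_deriv_sub_smul hA)
  · simpa using (hX.tendsto_nhdsGT_zero.sub_const x0).sub
      (((continuous_pow 2).div_const 2).smul continuous_const).continuousWithinAt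
  · exact (((hX.hasDerivAt ht).sub_const x0).sub
      (((hasDerivAt_pow 2 t).div_const 2).smul_const A)).congr_deriv (by simp)

theorem eq_of_tendsto_deriv_deriv (hf : Continuous (gradient f)) (hX : NesterovSol n f x0 X)
    (hA : Tendsto (deriv (deriv X)) (𝓝[>] 0) (𝓝 A)) :
    A = -(1 / 4 : ℝ) • gradient f x0 := by
  have hvel : Tendsto (fun t => t⁻¹ • deriv X t) (𝓝[>] 0) (𝓝 A) := by
    refine tendsto_sub_nhds_zero_iff.1 <|
      (hX.isLittleO_deriv_sub_smul hA).tendsto_inv_smul_nhds_zero.congr' ?_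
    filter_upwards [self_mem_nhdsWithin] with t (ht : 0 < t)
    rw [pow_one, smul_sub, smul_smul, inv_mul_cancel₀ ht.ne', one_smul]
  have hacc : Tendsto (deriv (deriv X)) (𝓝[>] 0) (𝓝 (-(3 : ℝ) • A - gradient f x0)) := by
    refine ((hvel.const_smul (-3 : ℝ)).sub
      ((hf.tendsto x0).comp hX.tendsto_nhdsGT_zero)).congr' ?_
    filter_upwards [self_mem_nhdsWithin] with t ht
    show -(3 : ℝ) • t⁻¹ • deriv X t - gradient f (X t) = deriv (deriv X) t
    linear_combination (norm := module) -(hX.2.2.2.2 t ht)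
  have hfixed := tendsto_nhds_unique hA hacc
  linear_combination (norm := module) (1 / 4 : ℝ) • hfixed

end NesterovSol

/-- **Initial asymptotics.** If the acceleration `Ẍ(t)` of the Nesterov ODE solution
converges as `t → 0⁺`, its limit is `-∇f(x₀)/4`, and consequently
`X(t) = x₀ - (t²/8)∇f(x₀) + o(t²)` as `t → 0⁺`. -/
theorem nesterov_ode_initial_asymptotic (n : ℕ) (f : E n → ℝ) (hf : MemFInf n f)
    (x0 : E n) (X : ℝ → E n) (hX : NesterovSol n f x0 X)
    (A : E n) (hA : Tendsto (fun t => deriv (deriv X) t) (𝓝[>] (0:ℝ)) (𝓝 A)) :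
    A = -(1 / 4 : ℝ) • gradient f x0 ∧
    (fun t : ℝ => X t - x0 + (t ^ 2 / 8) • gradient f x0) =o[𝓝[>] (0:ℝ)]
      fun t : ℝ => t ^ 2 := by
  have hlim := hX.eq_of_tendsto_deriv_deriv hf.continuous_gradient hA
  refine ⟨hlim, (hX.isLittleO_sub_sub_smul hA).congr_left fun t => ?_⟩
  rw [hlim]
  module
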